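/- For the Hatano-Nelson model with open boundary conditions and |J_s| > |g|, the matrix H_o with super-diagonal entries J_s + g and sub-diagonal entries J_s − g is similar via the diagonal matrix S = diag(r, r², ..., r^N) with r = √(|J_s − g|/|J_s + g|) to a real symmetric tridiagonal matrix with off-diagonal entries sgn(J_s)√(J_s² − g²); hence all eigenvalues of H_o are real and equal 2 sgn(J_s) √(J_s² − g²) cos(mπ/(N+1)) for m = 1,...,N. -/

import Mathlib

/-!
Conjugating by `S = diag(r, r², …, r^N)` multiplies the superdiagonal of `H` by `r` and divides
the subdiagonal by `r`; the choice `r = √(|J_s − g|/|J_s + g|)` makes both hoppings equal to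
`c = sgn(J_s)√(J_s² − g²)`, since `J_s + g` and `J_s − g` both carry the sign of `J_s`.
The resulting symmetric tridiagonal matrix has the eigenvectors `v_j = sin(j m π/(N+1))` with
eigenvalues `2c cos(mπ/(N+1))`, `m = 1, …, N`: the recurrence
`sin((j-1)θ) + sin((j+1)θ) = 2 cos θ sin(jθ)` holds in the interior, and `sin(0) = sin(mπ) = 0`
at the two ends. For `c ≠ 0` these `N` values are distinct (cosine is injective on `[0, π]`), so
they exhaust the roots of the degree-`N` characteristic polynomial.
-/

open Matrix

namespace Real

theorem mul_sqrt_div_eq_sqrt_mul {p : ℝ} (hp : 0 ≤ p) (q : ℝ) : p * √(q / p) = √(p * q) := by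
  rw [sqrt_div' q hp, sqrt_mul hp, mul_div_left_comm, div_sqrt, mul_comm]

theorem div_sqrt_div_eq_sqrt_mul {p : ℝ} (hp : 0 ≤ p) (q : ℝ) : q / √(q / p) = √(p * q) := by
  rw [sqrt_div' q hp, div_div_eq_mul_div, mul_div_right_comm, div_sqrt, sqrt_mul hp, mul_comm]

theorem sign_mul_abs_add_of_abs_lt {J g : ℝ} (h : |g| < |J|) : sign J * |J + g| = J + g := by
  rcases lt_trichotomy J 0 with hJ | rfl | hJ
  · rw [sign_of_neg hJ, abs_of_neg (by cases abs_cases g <;> cases abs_cases J <;> linarith)]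
    ring
  · simp only [abs_zero] at h
    linarith [abs_nonneg g]
  · rw [sign_of_pos hJ, abs_of_pos (by cases abs_cases g <;> cases abs_cases J <;> linarith)]
    ring

theorem injOn_cos_nat_mul_pi_div (N : ℕ) :
    Set.InjOn (fun m : ℕ => cos (m * π / (N + 1))) (Set.Iic (N + 1)) := by
  intro a ha b hb hab
  have hangle : ∀ m : ℕ, m ≤ N + 1 → (m : ℝ) * π / (N + 1) ∈ Set.Icc 0 π := by
    intro m hm
    refine ⟨by positivity, div_le_of_le_mul₀ (by positivity) pi_pos.le ?_⟩
    rw [mul_comm]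
    exact mul_le_mul_of_nonneg_left (by exact_mod_cast hm) pi_pos.le
  have hcast := injOn_cos (hangle a ha) (hangle b hb) hab
  field_simp at hcast
  exact_mod_cast hcast

end Real

namespace Matrix

theorem spectrum_inv_mul_mul {R n : Type*} [CommRing R] [Fintype n] [DecidableEq n]
    (A : Matrix n n R) {S : Matrix n n R} (hS : IsUnit S.det) :
    spectrum R (S⁻¹ * A * S) = spectrum R A :=
  spectrum.units_conjugate' (u := nonsingInvUnit S hS)

theorem mem_spectrum_of_mulVec_eq_smul {K n : Type*} [Field K] [Fintype n] [DecidableEq n]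
    {A : Matrix n n K} {v : n → K} {μ : K} (hv : v ≠ 0) (h : A *ᵥ v = μ • v) :
    μ ∈ spectrum K A := by
  rw [← spectrum_toLin']
  exact Module.End.HasEigenvalue.mem_spectrum
    (Module.End.hasEigenvalue_of_hasEigenvector ⟨Module.End.mem_eigenspace_iff.2 h, hv⟩)

theorem spectrum_eq_of_card_le {K n : Type*} [Field K] [Fintype n] [DecidableEq n]
    (A : Matrix n n K) {s : Finset K} (hs : ↑s ⊆ spectrum K A)
    (hcard : Fintype.card n ≤ s.card) :
    spectrum K A = s := by
  classical
  have hroots : spectrum K A = ↑A.charpoly.roots.toFinset := by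
    ext μ
    simp [mem_spectrum_iff_isRoot_charpoly, A.charpoly_monic.ne_zero]
  rw [hroots] at hs ⊢
  refine congrArg _ (Finset.eq_of_subset_of_card_le (Finset.coe_subset.1 hs) ?_).symm
  calc A.charpoly.roots.toFinset.card ≤ A.charpoly.roots.card := Multiset.toFinset_card_le _
    _ ≤ A.charpoly.natDegree := Polynomial.card_roots' _
    _ = Fintype.card n := A.charpoly_natDegree_eq_dim
    _ ≤ s.card := hcard

/-- `a` on the superdiagonal, `b` on the subdiagonal, zero elsewhere. -/
def tridiagonal {R : Type*} [Zero R] (N : ℕ) (a b : R) : Matrix (Fin N) (Fin N) R :=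
  of fun i j => if (j : ℕ) = i + 1 then a else if (i : ℕ) = j + 1 then b else 0

theorem tridiagonal_self {R : Type*} [Zero R] (N : ℕ) (c : R) :
    tridiagonal N c c =
      of fun i j : Fin N => if (j : ℕ) = i + 1 ∨ (i : ℕ) = j + 1 then c else 0 := by
  ext i j
  simp only [tridiagonal, of_apply]
  split_ifs <;> tauto

theorem tridiagonal_mulVec {R : Type*} [NonUnitalNonAssocSemiring R] {N : ℕ} (a b : R)
    {f : ℕ → R} (hf₀ : f 0 = 0) (hfN : f (N + 1) = 0) (i : Fin N) :
    (tridiagonal N a b *ᵥ fun j => f (j + 1)) i = a * f (i + 2) + b * f i := by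
  -- `i - 1` truncates at `i = 0`; the spurious term it then produces is `b * f 0 = 0`.
  have hterm : ∀ j : ℕ,
      (if j = i + 1 then a else if (i : ℕ) = j + 1 then b else 0) * f (j + 1)
        = (if j = i + 1 then a * f (i + 2) else 0) + (if j = i - 1 then b * f i else 0) := by
    intro j
    by_cases h₁ : j = i + 1
    · simp [h₁, show (i : ℕ) + 1 ≠ i - 1 by omega]
    by_cases h₂ : (i : ℕ) = j + 1
    · rw [if_neg h₁, if_pos h₂, if_neg h₁, if_pos (by omega), zero_add, h₂]
    by_cases h₃ : j = i - 1
    · have hi : (i : ℕ) = 0 := by omega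
      simp [hi, h₃, hf₀]
    · simp [h₁, h₂, h₃]
  rw [mulVec, dotProduct]
  simp only [tridiagonal, of_apply]
  rw [Fin.sum_univ_eq_sum_range
    (fun j => (if j = i + 1 then a else if (i : ℕ) = j + 1 then b else 0) * f (j + 1)) N]
  simp only [hterm, Finset.sum_add_distrib, Finset.sum_ite_eq', Finset.mem_range]
  rw [if_pos (show (i : ℕ) - 1 < N by omega)]
  split_ifs with hi
  · rfl
  · rw [show (i : ℕ) + 2 = N + 1 by omega, hfN, mul_zero]

theorem diagonal_pow_inv_mul_tridiagonal_mul {K : Type*} [Field K] {N : ℕ} {r : K}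
    (hr : r ≠ 0) (a b : K) :
    (diagonal fun i : Fin N => r ^ ((i : ℕ) + 1))⁻¹ * tridiagonal N a b *
        diagonal (fun i : Fin N => r ^ ((i : ℕ) + 1)) = tridiagonal N (a * r) (b / r) := by
  have hinv : (diagonal fun i : Fin N => r ^ ((i : ℕ) + 1))⁻¹
      = diagonal fun i : Fin N => (r ^ ((i : ℕ) + 1))⁻¹ := by
    refine inv_eq_left_inv ?_
    rw [diagonal_mul_diagonal, ← diagonal_one]
    exact congrArg _ (funext fun i => inv_mul_cancel₀ (pow_ne_zero _ hr))
  ext i j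
  rw [hinv, mul_diagonal, diagonal_mul]
  simp only [tridiagonal, of_apply]
  split_ifs with h₁ h₂
  · rw [h₁]; field_simp; ring
  · rw [h₂]; field_simp; ring
  · simp

theorem tridiagonal_mulVec_sin (c : ℂ) {N : ℕ} {θ : ℝ} (hθ : Real.sin ((N + 1) * θ) = 0) :
    tridiagonal N c c *ᵥ (fun j : Fin N => (Real.sin (((j : ℕ) + 1 : ℕ) * θ) : ℂ))
      = (2 * c * Real.cos θ) • fun j : Fin N => (Real.sin (((j : ℕ) + 1 : ℕ) * θ) : ℂ) := by
  ext i
  rw [tridiagonal_mulVec (f := fun k : ℕ => (Real.sin (k * θ) : ℂ)) c c (by simp)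
    (by exact_mod_cast congrArg Complex.ofReal hθ)]
  have hrec : Real.sin (i * θ) + Real.sin ((i + 2 : ℕ) * θ)
      = 2 * Real.cos θ * Real.sin ((i + 1 : ℕ) * θ) := by
    push_cast
    rw [show (i : ℝ) * θ = (i + 1) * θ - θ by ring,
      show ((i : ℝ) + 2) * θ = (i + 1) * θ + θ by ring, Real.sin_add, Real.sin_sub]
    ring
  have hrecC := congrArg Complex.ofReal hrec
  simp only [Complex.ofReal_add, Complex.ofReal_mul, Complex.ofReal_ofNat] at hrecC
  simp only [Pi.smul_apply, smul_eq_mul]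
  linear_combination c * hrecC

theorem two_mul_cos_mem_spectrum_tridiagonal (c : ℂ) {N m : ℕ} (hm : m ∈ Set.Icc 1 N) :
    2 * c * Real.cos (m * Real.pi / (N + 1)) ∈ spectrum ℂ (tridiagonal N c c) := by
  obtain ⟨hm₁, hmN⟩ := hm
  set θ := m * Real.pi / (N + 1) with hθ
  have hsin : Real.sin ((N + 1) * θ) = 0 := by
    rw [hθ, mul_div_cancel₀ _ (by positivity)]
    exact Real.sin_nat_mul_pi m
  refine mem_spectrum_of_mulVec_eq_smul ?_ (tridiagonal_mulVec_sin c hsin)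
  intro hv
  have h₀ := congrFun hv ⟨0, by omega⟩
  simp only [zero_add, Nat.cast_one, one_mul, Pi.zero_apply, Complex.ofReal_eq_zero] at h₀
  refine (Real.sin_pos_of_pos_of_lt_pi ?_ ?_).ne' h₀
  · exact div_pos (mul_pos (by exact_mod_cast hm₁) Real.pi_pos) (by positivity)
  · rw [div_lt_iff₀ (by positivity), mul_comm]
    exact mul_lt_mul_of_pos_left (by exact_mod_cast Nat.lt_succ_of_le hmN) Real.pi_pos

theorem spectrum_tridiagonal {c : ℂ} (hc : c ≠ 0) (N : ℕ) :
    spectrum ℂ (tridiagonal N c c)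
      = (fun m : ℕ => 2 * c * Real.cos (m * Real.pi / (N + 1))) '' Set.Icc 1 N := by
  classical
  set f := fun m : ℕ => 2 * c * Real.cos (m * Real.pi / (N + 1))
  have hinj : Set.InjOn f (Finset.Icc 1 N) := by
    intro a ha b hb hab
    simp only [Finset.coe_Icc, Set.mem_Icc] at ha hb
    refine Real.injOn_cos_nat_mul_pi_div N (Set.mem_Iic.2 (by omega))
      (Set.mem_Iic.2 (by omega)) ?_
    exact_mod_cast mul_left_cancel₀ (mul_ne_zero two_ne_zero hc) hab
  rw [← Finset.coe_Icc, ← Finset.coe_image]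
  refine spectrum_eq_of_card_le _ ?_ ?_
  · rw [Finset.coe_image, Finset.coe_Icc]
    rintro _ ⟨m, hm, rfl⟩
    exact two_mul_cos_mem_spectrum_tridiagonal c hm
  · rw [Finset.card_image_of_injOn hinj, Nat.card_Icc, Fintype.card_fin]
    omega

end Matrix

theorem hatanoNelson_gauge_rescaling {J g r c : ℝ} (h : |g| < |J|)
    (hr : r = √(|J - g| / |J + g|)) (hc : c = Real.sign J * √(J ^ 2 - g ^ 2)) :
    0 < r ∧ c ≠ 0 ∧ (J + g) * r = c ∧ (J - g) / r = c := by
  subst hr hc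
  have hsup : Real.sign J * |J + g| = J + g := Real.sign_mul_abs_add_of_abs_lt h
  have hsub : Real.sign J * |J - g| = J - g := by
    simpa [sub_eq_add_neg] using Real.sign_mul_abs_add_of_abs_lt (g := -g) (by rwa [abs_neg])
  have hsup₀ : 0 < |J + g| := by
    cases abs_cases g <;> cases abs_cases J <;> cases abs_cases (J + g) <;> linarith
  have hsub₀ : 0 < |J - g| := by
    cases abs_cases g <;> cases abs_cases J <;> cases abs_cases (J - g) <;> linarith
  have hsq : J ^ 2 - g ^ 2 = |J + g| * |J - g| := by
    rw [← abs_mul, abs_of_pos] <;> nlinarith [sq_lt_sq.2 h]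
  have hsign : Real.sign J ≠ 0 := by
    rw [Ne, Real.sign_eq_zero_iff]
    rintro rfl
    simp only [abs_zero] at h
    linarith [abs_nonneg g]
  refine ⟨Real.sqrt_pos.2 (div_pos hsub₀ hsup₀), mul_ne_zero hsign ?_, ?_, ?_⟩
  · rw [hsq]
    exact (Real.sqrt_pos.2 (mul_pos hsup₀ hsub₀)).ne'
  · nth_rw 1 [← hsup]
    rw [mul_assoc, Real.mul_sqrt_div_eq_sqrt_mul (abs_nonneg _), hsq]
  · nth_rw 1 [← hsub]
    rw [mul_div_assoc, Real.div_sqrt_div_eq_sqrt_mul (abs_nonneg _), hsq]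

/-- The open-boundary Hatano-Nelson matrix (`|J_s| > |g|`) is similar, via the
diagonal matrix `S = diag(r, r², …, r^N)` with `r = √(|J_s−g|/|J_s+g|)`, to the
real symmetric tridiagonal matrix with off-diagonal entries
`sgn(J_s)√(J_s²−g²)`; hence its eigenvalues are real, equal to
`2 sgn(J_s)√(J_s²−g²) cos(mπ/(N+1))`, `m = 1,…,N`. -/
theorem hatano_nelson_obc_spectrum (N : ℕ) (Js g : ℝ) (h : |g| < |Js|)
    (H : Matrix (Fin N) (Fin N) ℂ)
    (hH : ∀ i j : Fin N, H i j =
      if (j : ℕ) = (i : ℕ) + 1 then (Js + g : ℂ)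
      else if (i : ℕ) = (j : ℕ) + 1 then (Js - g : ℂ) else 0)
    (r : ℝ) (hr : r = Real.sqrt (|Js - g| / |Js + g|))
    (c : ℝ) (hc : c = Real.sign Js * Real.sqrt (Js ^ 2 - g ^ 2))
    (S : Matrix (Fin N) (Fin N) ℂ)
    (hS : S = Matrix.diagonal fun i : Fin N => (r : ℂ) ^ ((i : ℕ) + 1)) :
    S⁻¹ * H * S
        = Matrix.of (fun i j : Fin N =>
            if (j : ℕ) = (i : ℕ) + 1 ∨ (i : ℕ) = (j : ℕ) + 1 then (c : ℂ) else 0)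
      ∧ spectrum ℂ H
        = (fun m : ℕ => ((2 * c * Real.cos (m * Real.pi / (N + 1)) : ℝ) : ℂ))
            '' Set.Icc 1 N := by
  obtain ⟨hr₀, hc₀, hsup, hsub⟩ := hatanoNelson_gauge_rescaling h hr hc
  have hrC : (r : ℂ) ≠ 0 := Complex.ofReal_ne_zero.2 hr₀.ne'
  have hsim : S⁻¹ * H * S = tridiagonal N (c : ℂ) c := by
    rw [hS, show H = tridiagonal N (Js + g : ℂ) (Js - g) from ext hH,
      diagonal_pow_inv_mul_tridiagonal_mul hrC]
    congr 1
    · exact_mod_cast hsup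
    · exact_mod_cast hsub
  have hSdet : IsUnit S.det := by
    rw [hS, det_diagonal, isUnit_iff_ne_zero]
    exact Finset.prod_ne_zero_iff.2 fun i _ => pow_ne_zero _ hrC
  refine ⟨hsim.trans (tridiagonal_self N _), ?_⟩
  rw [← spectrum_inv_mul_mul H hSdet, hsim, spectrum_tridiagonal (Complex.ofReal_ne_zero.2 hc₀)]
  push_cast
  rfl
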